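/- For all real x > 1, the Gamma function satisfies x^{x-1/2} e^{-x} √(2π) ≤ Γ(x) ≤ x^{x-1/2} e^{-x} √(2π) e^{1/(12x)}. -/

import Mathlib

/-!
Write `Γ(x) = √(2π) x^(x-1/2) e^(-x) e^(μ(x))` (Binet's function `μ`). The expansion
`log (1 + 1/x) = 2 ∑ (2x+1)^-(2k+1) / (2k+1)` shows that `μ(x) - μ(x+1)` lies between `0` and
`1/(12x) - 1/(12(x+1))`, so `μ(x+N)` decreases and `μ(x+N) - 1/(12(x+N))` increases in `N`.
Both tend to `0`: along the integers this is Stirling's formula for `n!`, and log-convexity of `Γ`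
transfers it to `x + N`. Hence `0 ≤ μ(x) ≤ 1/(12x)`.
-/

open Real Filter Topology Set

noncomputable def stirlingExponent (x : ℝ) : ℝ := (x - 1/2) * log x - x

noncomputable def binet (x : ℝ) : ℝ := log (Gamma x) - stirlingExponent x - log √(2 * π)

lemma Gamma_eq_stirling_mul_exp_binet {x : ℝ} (hx : 0 < x) :
    Gamma x = x ^ (x - 1/2) * exp (-x) * √(2 * π) * exp (binet x) := by
  rw [binet, stirlingExponent, rpow_def_of_pos hx, ← exp_log (Gamma_pos_of_pos hx),
    ← exp_log (show 0 < √(2 * π) by positivity)]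
  simp only [← exp_add, log_exp]
  ring_nf

lemma log_Gamma_add_one {x : ℝ} (hx : 0 < x) :
    log (Gamma (x + 1)) = log (Gamma x) + log x := by
  rw [Gamma_add_one hx.ne', log_mul hx.ne' (Gamma_pos_of_pos hx).ne', add_comm]

lemma binet_sub_binet_add_one {x : ℝ} (hx : 0 < x) :
    binet x - binet (x + 1) = (x + 1/2) * log (1 + x⁻¹) - 1 := by
  have hlog : log (1 + x⁻¹) = log (x + 1) - log x := by
    rw [← log_div (by positivity) hx.ne']
    congr 1
    field_simp
  rw [binet, binet, stirlingExponent, stirlingExponent, log_Gamma_add_one hx, hlog]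
  ring

lemma hasSum_binet_sub_binet_add_one {x : ℝ} (hx : 0 < x) :
    HasSum (fun k : ℕ => (1 : ℝ) / (2 * (k + 1 : ℕ) + 1) * ((1 / (2 * x + 1)) ^ 2) ^ (k + 1))
      (binet x - binet (x + 1)) := by
  let f (k : ℕ) := (1 : ℝ) / (2 * k + 1) * ((1 / (2 * x + 1)) ^ 2) ^ k
  change HasSum (fun k => f (k + 1)) _
  rw [hasSum_nat_add_iff, binet_sub_binet_add_one hx]
  convert! (hasSum_log_one_add_inv hx).mul_left (x + 1/2) using 1
  · ext k
    dsimp only [f]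
    rw [← pow_mul, pow_succ]
    field
  · simp [f]

lemma binet_add_one_le {x : ℝ} (hx : 0 < x) : binet (x + 1) ≤ binet x :=
  sub_nonneg.mp <| (hasSum_binet_sub_binet_add_one hx).nonneg fun _ => by positivity

lemma binet_sub_inv_le_binet_add_one_sub_inv {x : ℝ} (hx : 0 < x) :
    binet x - 1 / (12 * x) ≤ binet (x + 1) - 1 / (12 * (x + 1)) := by
  set r := ((1 : ℝ) / (2 * x + 1)) ^ 2 with hr
  have hr1 : r < 1 := by
    rw [hr, div_pow, one_pow, div_lt_one (by positivity)]
    nlinarith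
  have hsum : r * (1 - r)⁻¹ / 3 = 1 / (12 * x) - 1 / (12 * (x + 1)) := by
    rw [hr]
    field_simp
    rw [show (2 * x + 1) ^ 2 - 1 = 4 * x * (x + 1) by ring]
    field
  -- the series is dominated termwise by the geometric series `∑ r^(k+1) / 3`
  have hgeom : HasSum (fun k : ℕ => r ^ (k + 1) / 3) (1 / (12 * x) - 1 / (12 * (x + 1))) := by
    rw [← hsum]
    convert! ((hasSum_geometric_of_lt_one (by positivity) hr1).mul_left r).div_const 3 using 1
    ext k
    ring
  have := hasSum_le (fun k => ?_) (hasSum_binet_sub_binet_add_one hx) hgeom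
  · linarith
  · rw [div_eq_mul_one_div _ (3 : ℝ), mul_comm]
    gcongr
    push_cast
    linarith [k.cast_nonneg (α := ℝ)]

lemma hasDerivAt_stirlingExponent {x : ℝ} (hx : 0 < x) :
    HasDerivAt stirlingExponent (log x - 1 / (2 * x)) x := by
  have := ((hasDerivAt_id x).sub_const (1/2)).mul (hasDerivAt_log hx.ne') |>.sub (hasDerivAt_id x)
  refine this.congr_deriv ?_
  simp only [id, one_mul]
  field_simp
  ring

lemma stirlingExponent_add_sub_bounds {m y : ℝ} (hm : 0 < m) (hy0 : 0 ≤ y) (hy1 : y ≤ 1) :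
    y * (log m - 1 / (2 * m)) ≤ stirlingExponent (m + y) - stirlingExponent m ∧
      stirlingExponent (m + y) - stirlingExponent m ≤ y * log (m + 1) := by
  have hderiv : ∀ t ∈ Icc m (m + 1), HasDerivAt stirlingExponent (log t - 1 / (2 * t)) t :=
    fun t ht => hasDerivAt_stirlingExponent (hm.trans_le ht.1)
  have hcont : ContinuousOn stirlingExponent (Icc m (m + 1)) :=
    fun t ht => (hderiv t ht).continuousAt.continuousWithinAt
  have hdiff : DifferentiableOn ℝ stirlingExponent (interior (Icc m (m + 1))) := fun t ht =>
    (hderiv t (interior_subset ht)).differentiableAt.differentiableWithinAt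
  have hderiv_bounds : ∀ t ∈ interior (Icc m (m + 1)),
      log m - 1 / (2 * m) ≤ deriv stirlingExponent t ∧
        deriv stirlingExponent t ≤ log (m + 1) := by
    intro t ht
    rw [interior_Icc] at ht
    have ht0 : 0 < t := hm.trans ht.1
    have hinv : 1 / (2 * t) ≤ 1 / (2 * m) := by gcongr; exact ht.1.le
    rw [(hderiv t (Ioo_subset_Icc_self ht)).deriv]
    constructor
    · linarith [log_le_log hm ht.1.le]
    · linarith [log_le_log ht0 ht.2.le, show 0 < 1 / (2 * t) by positivity]
  have hm_mem : m ∈ Icc m (m + 1) := ⟨le_rfl, by linarith⟩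
  have hmy_mem : m + y ∈ Icc m (m + 1) := ⟨by linarith, by linarith⟩
  have hlower := (convex_Icc m (m + 1)).mul_sub_le_image_sub_of_le_deriv hcont hdiff
    (fun t ht => (hderiv_bounds t ht).1) m hm_mem (m + y) hmy_mem (by linarith)
  have hupper := (convex_Icc m (m + 1)).image_sub_le_mul_sub_of_deriv_le hcont hdiff
    (fun t ht => (hderiv_bounds t ht).2) m hm_mem (m + y) hmy_mem (by linarith)
  rw [add_sub_cancel_left, mul_comm] at hlower hupper
  exact ⟨hlower, hupper⟩

lemma binet_natCast_add_one (n : ℕ) :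
    binet (n + 1) = log (Stirling.stirlingSeq (n + 1)) - log √π := by
  have hn : (0 : ℝ) < n + 1 := by positivity
  rw [binet, stirlingExponent, Gamma_nat_eq_factorial, Stirling.log_stirlingSeq_formula,
    Nat.factorial_succ]
  push_cast
  rw [log_mul hn.ne' (by positivity), log_mul two_ne_zero hn.ne', log_div hn.ne' (exp_ne_zero 1),
    log_exp, log_sqrt (by positivity), log_sqrt pi_pos.le, log_mul two_ne_zero pi_pos.ne']
  ring

lemma tendsto_binet_natCast : Tendsto (fun n : ℕ => binet n) atTop (𝓝 0) := by
  rw [← tendsto_add_atTop_iff_nat 1]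
  have hlim := ((continuousAt_log (by positivity : √π ≠ 0)).tendsto.comp
    (Stirling.tendsto_stirlingSeq_sqrt_pi.comp (tendsto_add_atTop_nat 1))).sub_const (log √π)
  rw [sub_self] at hlim
  refine hlim.congr fun n => ?_
  simp [binet_natCast_add_one]

lemma abs_binet_natCast_add_sub_le {n : ℕ} (hn : 2 ≤ n) {y : ℝ} (hy0 : 0 < y)
    (hy1 : y ≤ 1) :
    |binet (n + y) - binet n| ≤ 2 / (n - 1) := by
  have hn1 : (1 : ℝ) < n := by exact_mod_cast hn
  have hfeq : ∀ {t : ℝ}, 0 < t → (log ∘ Gamma) (t + 1) = (log ∘ Gamma) t + log t :=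
    log_Gamma_add_one
  have hΓ_le := BohrMollerup.f_add_nat_le (n := n) convexOn_log_Gamma hfeq (by omega) hy0 hy1
  have hΓ_ge := BohrMollerup.f_add_nat_ge convexOn_log_Gamma hfeq hn hy0
  simp only [Function.comp_apply] at hΓ_le hΓ_ge
  obtain ⟨hφ_ge, hφ_le⟩ := stirlingExponent_add_sub_bounds (m := n) (by linarith) hy0.le hy1
  have hdiff : binet (n + y) - binet n = (log (Gamma (n + y)) - log (Gamma n)) -
      (stirlingExponent (n + y) - stirlingExponent n) := by
    rw [binet, binet]; ring
  have hn1' : (n : ℝ) - 1 ≠ 0 := by linarith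
  have hlog : log (n + 1) - log (n - 1) ≤ 2 / (n - 1) := by
    have h := log_le_sub_one_of_pos (show (0 : ℝ) < (n + 1) / (n - 1) by
      apply div_pos <;> linarith)
    rw [log_div (by linarith) (by linarith)] at h
    rwa [show ((n : ℝ) + 1) / (n - 1) - 1 = 2 / (n - 1) by field] at h
  have hlog_nonneg : 0 ≤ log (n + 1) - log (n - 1) :=
    sub_nonneg.mpr (log_le_log (by linarith) (by linarith))
  have hhalf : 1 / (2 * n) ≤ 2 / ((n : ℝ) - 1) := by
    rw [div_le_div_iff₀ (by linarith) (by linarith)]; linarith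
  have hlower : y * (log (n + 1) - log (n - 1)) ≤ 2 / (n - 1) :=
    (mul_le_of_le_one_left hlog_nonneg hy1).trans hlog
  have hupper : y * (1 / (2 * n)) ≤ 2 / (n - 1) :=
    (mul_le_of_le_one_left (by positivity) hy1).trans hhalf
  rw [hdiff, abs_le]
  constructor <;> linarith

lemma tendsto_binet_add_natCast {x : ℝ} (hx : 0 < x) :
    Tendsto (fun N : ℕ => binet (x + N)) atTop (𝓝 0) := by
  -- write `x = k + y` with `k : ℕ` and `0 < y ≤ 1`
  set k := ⌈x⌉₊ - 1
  have hk : (k : ℝ) = ⌈x⌉₊ - 1 := by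
    rw [Nat.cast_sub (Nat.one_le_iff_ne_zero.mpr (Nat.ceil_pos.mpr hx).ne'), Nat.cast_one]
  have hy0 : 0 < x - k := by linarith [Nat.ceil_lt_add_one hx.le]
  have hy1 : x - k ≤ 1 := by linarith [Nat.le_ceil x]
  have hnat : Tendsto (fun N : ℕ => binet ((N + k : ℕ) : ℝ)) atTop (𝓝 0) :=
    tendsto_binet_natCast.comp (tendsto_add_atTop_nat k)
  have hfrac :
      Tendsto (fun N : ℕ => binet (x + N) - binet ((N + k : ℕ) : ℝ)) atTop (𝓝 0) := by
    refine squeeze_zero_norm' ?_ (tendsto_const_div_atTop_nhds_zero_nat 4)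
    filter_upwards [eventually_ge_atTop 2] with N hN
    have hN' : (2 : ℝ) ≤ N := by exact_mod_cast hN
    have hx_eq : x + N = ((N + k : ℕ) : ℝ) + (x - k) := by push_cast; ring
    rw [Real.norm_eq_abs, hx_eq]
    refine (abs_binet_natCast_add_sub_le (by omega) hy0 hy1).trans ?_
    rw [div_le_div_iff₀ (by push_cast; linarith [k.cast_nonneg (α := ℝ)]) (by linarith)]
    push_cast
    nlinarith [k.cast_nonneg (α := ℝ)]
  simpa using hnat.add hfrac

lemma binet_nonneg {x : ℝ} (hx : 0 < x) : 0 ≤ binet x := by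
  have hanti : Antitone fun N : ℕ => binet (x + N) := antitone_nat_of_succ_le fun N => by
    simpa [add_assoc] using binet_add_one_le (by positivity : 0 < x + N)
  simpa using hanti.le_of_tendsto (tendsto_binet_add_natCast hx) 0

lemma binet_le_inv {x : ℝ} (hx : 0 < x) : binet x ≤ 1 / (12 * x) := by
  have hmono : Monotone fun N : ℕ => binet (x + N) - 1 / (12 * (x + N)) :=
    monotone_nat_of_le_succ fun N => by
      simpa [add_assoc] using binet_sub_inv_le_binet_add_one_sub_inv (by positivity : 0 < x + N)
  have hinv : Tendsto (fun N : ℕ => 1 / (12 * (x + N))) atTop (𝓝 0) :=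
    tendsto_const_nhds.div_atTop <|
      (tendsto_atTop_add_const_left _ x tendsto_natCast_atTop_atTop).const_mul_atTop (by norm_num)
  have := hmono.ge_of_tendsto (by simpa using (tendsto_binet_add_natCast hx).sub hinv) 0
  simp only [CharP.cast_eq_zero, add_zero] at this
  linarith

theorem gamma_stirling_bounds (x : ℝ) (hx : 1 < x) :
    x ^ (x - 1/2) * Real.exp (-x) * Real.sqrt (2 * Real.pi) ≤ Real.Gamma x ∧
    Real.Gamma x ≤
      x ^ (x - 1/2) * Real.exp (-x) * Real.sqrt (2 * Real.pi) * Real.exp (1 / (12 * x)) := by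
  have hx0 : 0 < x := by linarith
  have hmain : 0 < x ^ (x - 1/2) * exp (-x) * √(2 * π) := by positivity
  rw [Gamma_eq_stirling_mul_exp_binet hx0]
  exact ⟨le_mul_of_one_le_right hmain.le (one_le_exp (binet_nonneg hx0)),
    mul_le_mul_of_nonneg_left (exp_le_exp.mpr (binet_le_inv hx0)) hmain.le⟩
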